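/- Let A be a uniform algebra on a compact Hausdorff space Ω and let f ∈ C(Ω,ℝ) be strictly positive with f⁻² ∈ 𝒢. If there is a surjective isometric A-module isomorphism Af → A, then f ∈ Q (f = |g| for some invertible g ∈ A). If Af is almost A-isometric to A, then f ∈ Q̄⁺ (f is a uniform limit of moduli of invertible elements of A). -/

import Mathlib

open Filter

section Preamble

variable {Ω : Type*} [TopologicalSpace Ω] [CompactSpace Ω] [T2Space Ω]

/-- The evaluation functional at a point `x`, as a continuous linear functional on a
subspace `A` of `C(Ω, ℂ)`. -/
noncomputable def evalFunctional (A : Submodule ℂ C(Ω, ℂ)) (x : Ω) : A →L[ℂ] ℂ :=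
  LinearMap.mkContinuous
    { toFun := fun a => (a : C(Ω, ℂ)) x
      map_add' := fun a b => rfl
      map_smul' := fun c a => rfl } 1
    (fun a => by rw [one_mul]; exact (a : C(Ω, ℂ)).norm_coe_le_norm x)

/-- `x` is in the Choquet boundary of the subspace `A ⊆ C(Ω, ℂ)` iff the evaluation
functional at `x` is an extreme point of the closed unit ball of the dual space `A*`. -/
def InChoquet (A : Submodule ℂ C(Ω, ℂ)) (x : Ω) : Prop :=
  evalFunctional A x ∈ Set.extremePoints ℝ (Metric.closedBall (0 : A →L[ℂ] ℂ) 1)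

/-- A real-valued continuous function, viewed as a complex-valued continuous function. -/
noncomputable def ofRealCM (f : C(Ω, ℝ)) : C(Ω, ℂ) :=
  ⟨fun x => (f x : ℂ), Complex.continuous_ofReal.comp f.continuous⟩

/-- The submodule `A·f = {a·f : a ∈ A}` of `C(Ω, ℂ)`. -/
noncomputable def moduleAf (A : Subalgebra ℂ C(Ω, ℂ)) (f : C(Ω, ℝ)) : Submodule ℂ C(Ω, ℂ) :=
  (Subalgebra.toSubmodule A).map (LinearMap.mulRight ℂ (ofRealCM f))

/-- A map `S` between two `A`-submodules `X, Y` of `C(Ω, ℂ)` is an `A`-module map if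
`S(a·x) = a·S(x)` for all `a ∈ A`, `x ∈ X`. -/
def IsModuleMapOn (A : Subalgebra ℂ C(Ω, ℂ)) {X Y : Submodule ℂ C(Ω, ℂ)} (S : X → Y) : Prop :=
  ∀ (a : C(Ω, ℂ)), a ∈ A → ∀ (x : X) (h : a * (x : C(Ω, ℂ)) ∈ X),
    ((S ⟨a * (x : C(Ω, ℂ)), h⟩ : C(Ω, ℂ))) = a * ((S x : C(Ω, ℂ)))

/-- There is a surjective linear isometry from `X` onto `Y`. -/
def ExistsLinearIsometry (X Y : Submodule ℂ C(Ω, ℂ)) : Prop :=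
  ∃ S : X →ₗ[ℂ] Y, Function.Surjective S ∧ ∀ x, ‖S x‖ = ‖x‖

/-- There is a surjective isometric `A`-module isomorphism from `X` onto `Y`. -/
def ExistsModuleIsometry (A : Subalgebra ℂ C(Ω, ℂ)) (X Y : Submodule ℂ C(Ω, ℂ)) : Prop :=
  ∃ S : X →ₗ[ℂ] Y, Function.Surjective S ∧ (∀ x, ‖S x‖ = ‖x‖) ∧ IsModuleMapOn A S

/-- `X` and `Y` are almost isometric: for every `ε > 0` there is a bijective bounded
linear map `T : X → Y` with `‖T‖·‖T⁻¹‖ < 1 + ε`. -/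
def AlmostIsometric (X Y : Submodule ℂ C(Ω, ℂ)) : Prop :=
  ∀ ε : ℝ, 0 < ε → ∃ T : X ≃L[ℂ] Y,
    ‖T.toContinuousLinearMap‖ * ‖T.symm.toContinuousLinearMap‖ < 1 + ε

/-- `X` and `Y` are almost `A`-isometric: for every `ε > 0` there is a bijective bounded
`A`-module map `T : X → Y` with `‖T‖·‖T⁻¹‖ < 1 + ε`. -/
def AlmostAIsometric (A : Subalgebra ℂ C(Ω, ℂ)) (X Y : Submodule ℂ C(Ω, ℂ)) : Prop :=
  ∀ ε : ℝ, 0 < ε → ∃ T : X ≃L[ℂ] Y, IsModuleMapOn A T ∧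
    ‖T.toContinuousLinearMap‖ * ‖T.symm.toContinuousLinearMap‖ < 1 + ε

/-- `f ∈ Q`: `f = |g|` for an invertible element `g` of `A`. -/
def MemQ (A : Subalgebra ℂ C(Ω, ℂ)) (f : C(Ω, ℝ)) : Prop :=
  ∃ g ∈ A, (∃ g' ∈ A, g * g' = 1) ∧ ∀ x, f x = ‖g x‖

/-- `f ∈ Q̄`: `f` is a uniform limit on `Ω` of moduli of invertible elements of `A`. -/
def MemQbar (A : Subalgebra ℂ C(Ω, ℂ)) (f : C(Ω, ℝ)) : Prop :=
  ∃ g : ℕ → C(Ω, ℂ), (∀ n, g n ∈ A ∧ ∃ g' ∈ A, g n * g' = 1) ∧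
    TendstoUniformly (fun n x => ‖g n x‖) (fun x => f x) atTop

/-- `f ∈ 𝓜_A(Ω)`: there are sequences of `A`-tuples `Kₙ`, `Hₙ` with `Kₙ.Hₙ = 1`,
`‖Kₙ(w)‖₂ → f(w)` uniformly, and `‖Hₙ(w)‖₂ → f(w)⁻¹` uniformly on `Ω`. -/
def MemM (A : Subalgebra ℂ C(Ω, ℂ)) (f : C(Ω, ℝ)) : Prop :=
  ∃ (n : ℕ → ℕ) (K H : (m : ℕ) → Fin (n m) → C(Ω, ℂ)),
    (∀ m i, K m i ∈ A) ∧ (∀ m i, H m i ∈ A) ∧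
    (∀ m (x : Ω), (∑ i, K m i x * H m i x) = 1) ∧
    TendstoUniformly (fun m x => Real.sqrt (∑ i, ‖K m i x‖ ^ 2))
      (fun x => f x) atTop ∧
    TendstoUniformly (fun m x => Real.sqrt (∑ i, ‖H m i x‖ ^ 2))
      (fun x => (f x)⁻¹) atTop

/-- The set `𝓕` of finite sums `Σᵢ |gᵢ|²` with `gᵢ ∈ A`. -/
def calF (A : Subalgebra ℂ C(Ω, ℂ)) : Set C(Ω, ℝ) :=
  {u | ∃ (n : ℕ) (g : Fin n → C(Ω, ℂ)), (∀ i, g i ∈ A) ∧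
    ∀ x, u x = ∑ i, ‖g i x‖ ^ 2}

end Preamble
/-!
A module map `S : A·f → A` is multiplication by `g = S f ∈ A`, i.e. `S (a·f) = a·g`, and
surjectivity makes `g` invertible: `S (a₀·f) = 1` forces `a₀·g = 1`. Since `|a₀|·f ≤ ‖S⁻¹‖`,
this gives `f ≤ ‖S⁻¹‖·|g|`. For the reverse bound approximate `f⁻²` by `u = Σ |hᵢ|²` and test
`S` on `a = Σ conj (hᵢ x₀)·hᵢ`: Cauchy–Schwarz gives `|a|² ≤ u x₀ · u`, so `‖a·f‖² ≲ u x₀`,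
while `(a·g) x₀ = u x₀ · g x₀`; hence `|g| ≤ ‖S‖·f`. So `‖S⁻¹‖·|g|` lies between `f` and
`‖S‖·‖S⁻¹‖·f`: an isometry gives `f = |g|`, and almost isometries give `f ∈ Q̄`.
-/

section UniformAlgebraModules

variable {Ω : Type*} [TopologicalSpace Ω] {A : Subalgebra ℂ C(Ω, ℂ)} {f : C(Ω, ℝ)}

@[simp]
lemma ofRealCM_apply (f : C(Ω, ℝ)) (x : Ω) : ofRealCM f x = (f x : ℂ) := rfl

lemma mul_ofRealCM_mem_moduleAf {a : C(Ω, ℂ)} (ha : a ∈ A) : a * ofRealCM f ∈ moduleAf A f :=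
  ⟨a, ha, rfl⟩

lemma ofRealCM_mem_moduleAf : ofRealCM f ∈ moduleAf A f := by
  simpa using mul_ofRealCM_mem_moduleAf (f := f) A.one_mem

lemma IsModuleMapOn.apply_mul_ofRealCM {Y : Submodule ℂ C(Ω, ℂ)} {S : moduleAf A f → Y}
    (hS : IsModuleMapOn A S) {a : C(Ω, ℂ)} (ha : a ∈ A) :
    (S ⟨a * ofRealCM f, mul_ofRealCM_mem_moduleAf ha⟩ : C(Ω, ℂ)) =
      a * S ⟨ofRealCM f, ofRealCM_mem_moduleAf⟩ :=
  hS a ha ⟨ofRealCM f, ofRealCM_mem_moduleAf⟩ _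

lemma exists_apply_mul_ofRealCM_eq_one {S : moduleAf A f → Subalgebra.toSubmodule A}
    (hsurj : Function.Surjective S) :
    ∃ a₀, ∃ ha₀ : a₀ ∈ A,
      S ⟨a₀ * ofRealCM f, mul_ofRealCM_mem_moduleAf ha₀⟩ = ⟨1, A.one_mem⟩ := by
  obtain ⟨⟨_, a₀, ha₀, rfl⟩, h⟩ := hsurj ⟨1, A.one_mem⟩
  exact ⟨a₀, ha₀, h⟩

variable [CompactSpace Ω]

lemma norm_sq_mul_le_of_mem_calF {g : C(Ω, ℂ)} {C : ℝ}
    (hg : ∀ a ∈ A, ‖a * g‖ ≤ C * ‖a * ofRealCM f‖) {u : C(Ω, ℝ)} (hu : u ∈ calF A) (x₀ : Ω) :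
    ‖g x₀‖ ^ 2 * u x₀ ≤ C ^ 2 * ‖u * f ^ 2‖ := by
  obtain ⟨n, h, hA, hu⟩ := hu
  set a : C(Ω, ℂ) := ∑ i, starRingEnd ℂ (h i x₀) • h i
  have haA : a ∈ A := sum_mem fun i _ => A.smul_mem (hA i) _
  have ha : ∀ x, a x = ∑ i, starRingEnd ℂ (h i x₀) * h i x := fun x => by simp [a]
  have hu0 : 0 ≤ u x₀ := by rw [hu]; positivity
  have hax₀ : a x₀ = u x₀ := by simp only [ha, Complex.conj_mul', hu]; push_cast; rfl
  have hCS : ∀ x, ‖a x‖ ^ 2 ≤ u x₀ * u x := fun x => calc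
    ‖a x‖ ^ 2 ≤ (∑ i, ‖h i x₀‖ * ‖h i x‖) ^ 2 := by
      gcongr
      simpa [ha] using norm_sum_le Finset.univ fun i => starRingEnd ℂ (h i x₀) * h i x
    _ ≤ (∑ i, ‖h i x₀‖ ^ 2) * ∑ i, ‖h i x‖ ^ 2 := Finset.sum_mul_sq_le_sq_mul_sq _ _ _
    _ = u x₀ * u x := by rw [hu, hu]
  have haf : ‖a * ofRealCM f‖ ^ 2 ≤ u x₀ * ‖u * f ^ 2‖ := by
    have hB : 0 ≤ u x₀ * ‖u * f ^ 2‖ := by positivity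
    suffices ‖a * ofRealCM f‖ ≤ √(u x₀ * ‖u * f ^ 2‖) by
      have := pow_le_pow_left₀ (norm_nonneg _) this 2
      rwa [Real.sq_sqrt hB] at this
    refine (ContinuousMap.norm_le _ (Real.sqrt_nonneg _)).2 fun x => ?_
    refine (Real.le_sqrt (norm_nonneg _) hB).2 ?_
    have hux : u x * f x ^ 2 ≤ ‖u * f ^ 2‖ :=
      (le_abs_self _).trans ((u * f ^ 2).norm_coe_le_norm x)
    calc ‖(a * ofRealCM f) x‖ ^ 2 = ‖a x‖ ^ 2 * f x ^ 2 := by simp [mul_pow]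
      _ ≤ u x₀ * u x * f x ^ 2 := by gcongr; exact hCS x
      _ ≤ u x₀ * ‖u * f ^ 2‖ := by rw [mul_assoc]; gcongr
  have hmain : u x₀ * (‖g x₀‖ ^ 2 * u x₀) ≤ u x₀ * (C ^ 2 * ‖u * f ^ 2‖) := calc
    u x₀ * (‖g x₀‖ ^ 2 * u x₀) = ‖(a * g) x₀‖ ^ 2 := by
      rw [ContinuousMap.mul_apply, hax₀, norm_mul, Complex.norm_real, Real.norm_of_nonneg hu0]
      ring
    _ ≤ ‖a * g‖ ^ 2 := by gcongr; exact (a * g).norm_coe_le_norm x₀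
    _ ≤ (C * ‖a * ofRealCM f‖) ^ 2 := by gcongr; exact hg a haA
    _ ≤ u x₀ * (C ^ 2 * ‖u * f ^ 2‖) := by
      rw [mul_pow, mul_left_comm]; gcongr
  rcases hu0.eq_or_lt with h0 | hpos
  · rw [← h0, mul_zero]; positivity
  · exact le_of_mul_le_mul_left hmain hpos

lemma norm_sq_mul_le_of_mem_closure_calF {g : C(Ω, ℂ)} {C : ℝ}
    (hg : ∀ a ∈ A, ‖a * g‖ ≤ C * ‖a * ofRealCM f‖) {u : C(Ω, ℝ)} (hu : u ∈ closure (calF A))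
    (x₀ : Ω) : ‖g x₀‖ ^ 2 * u x₀ ≤ C ^ 2 * ‖u * f ^ 2‖ := by
  have hclosed : IsClosed {u : C(Ω, ℝ) | ∀ x, ‖g x‖ ^ 2 * u x ≤ C ^ 2 * ‖u * f ^ 2‖} := by
    simp only [Set.ofPred_forall]
    exact isClosed_iInter fun x => isClosed_le (by fun_prop) (by fun_prop)
  exact closure_minimal (fun v hv => norm_sq_mul_le_of_mem_calF hg hv) hclosed hu x₀

lemma norm_apply_le_of_forall_norm_mul_le {g : C(Ω, ℂ)} {C : ℝ} (hC : 0 ≤ C)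
    (hg : ∀ a ∈ A, ‖a * g‖ ≤ C * ‖a * ofRealCM f‖) (hf : ∀ x, 0 ≤ f x) {u : C(Ω, ℝ)}
    (hu : u ∈ closure (calF A)) (huf : ∀ x, u x * f x ^ 2 = 1) (x : Ω) :
    ‖g x‖ ≤ C * f x := by
  have : Nonempty Ω := ⟨x⟩
  have hone : u * f ^ 2 = 1 := ContinuousMap.ext fun y => by simpa using huf y
  have h := norm_sq_mul_le_of_mem_closure_calF hg hu x
  rw [hone, norm_one, mul_one] at h
  refine (pow_le_pow_iff_left₀ (norm_nonneg _) (mul_nonneg hC (hf x)) two_ne_zero).1 ?_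
  calc ‖g x‖ ^ 2 = ‖g x‖ ^ 2 * u x * f x ^ 2 := by rw [mul_assoc, huf, mul_one]
    _ ≤ C ^ 2 * f x ^ 2 := by gcongr
    _ = (C * f x) ^ 2 := (mul_pow _ _ _).symm

lemma le_mul_norm_apply_of_mul_eq_one {a g : C(Ω, ℂ)} (hag : a * g = 1) {C : ℝ}
    (ha : ‖a * ofRealCM f‖ ≤ C) (x : Ω) : f x ≤ C * ‖g x‖ := by
  have hx : ‖a x‖ * ‖g x‖ = 1 := by
    rw [← norm_mul, ← ContinuousMap.mul_apply, hag, ContinuousMap.one_apply, norm_one]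
  have hC : |f x| * ‖a x‖ ≤ C := by
    simpa [mul_comm] using ((a * ofRealCM f).norm_coe_le_norm x).trans ha
  calc f x ≤ |f x| * (‖a x‖ * ‖g x‖) := by rw [hx, mul_one]; exact le_abs_self _
    _ = |f x| * ‖a x‖ * ‖g x‖ := by ring
    _ ≤ C * ‖g x‖ := by gcongr

lemma exists_unit_le_norm_le {u : C(Ω, ℝ)} (hf : ∀ x, 0 < f x) (hu : u ∈ closure (calF A))
    (huf : ∀ x, u x * f x ^ 2 = 1) {S : moduleAf A f → Subalgebra.toSubmodule A}
    (hS : IsModuleMapOn A S) (hsurj : Function.Surjective S) {C₁ C₂ : ℝ} (hC₁ : 0 ≤ C₁)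
    (hC₂ : 0 ≤ C₂) (hS₁ : ∀ x, ‖S x‖ ≤ C₁ * ‖x‖) (hS₂ : ∀ x, ‖x‖ ≤ C₂ * ‖S x‖) :
    ∃ g ∈ A, (∃ g' ∈ A, g * g' = 1) ∧ ∀ x, f x ≤ ‖g x‖ ∧ ‖g x‖ ≤ C₁ * C₂ * f x := by
  set g : C(Ω, ℂ) := ↑(S ⟨ofRealCM f, ofRealCM_mem_moduleAf⟩)
  have hgA : g ∈ A := (S _).2
  obtain ⟨a₀, ha₀, hSa₀⟩ := exists_apply_mul_ofRealCM_eq_one hsurj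
  have ha₀g : a₀ * g = 1 := by
    rw [← hS.apply_mul_ofRealCM ha₀, hSa₀]
  have hup : ∀ x, ‖g x‖ ≤ C₁ * f x := by
    refine norm_apply_le_of_forall_norm_mul_le hC₁ (fun a ha => ?_) (fun x => (hf x).le) hu huf
    have h := hS₁ ⟨_, mul_ofRealCM_mem_moduleAf ha⟩
    rwa [Submodule.coe_norm, hS.apply_mul_ofRealCM ha] at h
  have hlow : ∀ x, f x ≤ C₂ * ‖g x‖ := by
    refine le_mul_norm_apply_of_mul_eq_one ha₀g ?_
    have h := hS₂ ⟨_, mul_ofRealCM_mem_moduleAf ha₀⟩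
    rw [hSa₀] at h
    exact h.trans (mul_le_of_le_one_right hC₂ ((ContinuousMap.norm_le _ zero_le_one).2 (by simp)))
  rcases hC₂.eq_or_lt with rfl | hC₂pos
  · -- `C₂ = 0` is only possible for empty `Ω`
    refine ⟨g, hgA, ⟨a₀, ha₀, mul_comm a₀ g ▸ ha₀g⟩, fun x => ?_⟩
    linarith [hlow x, hf x]
  · have hC₂ne : (C₂ : ℂ) ≠ 0 := Complex.ofReal_ne_zero.2 hC₂pos.ne'
    refine ⟨(C₂ : ℂ) • g, A.smul_mem hgA _, ⟨(C₂ : ℂ)⁻¹ • a₀, A.smul_mem ha₀ _, ?_⟩, fun x => ?_⟩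
    · rw [smul_mul_smul_comm, mul_inv_cancel₀ hC₂ne, one_smul, mul_comm, ha₀g]
    · have hnorm : ‖((C₂ : ℂ) • g) x‖ = C₂ * ‖g x‖ := by
        simp [Complex.norm_real, abs_of_pos hC₂pos]
      refine ⟨hnorm ▸ hlow x, ?_⟩
      calc ‖((C₂ : ℂ) • g) x‖ = C₂ * ‖g x‖ := hnorm
        _ ≤ C₂ * (C₁ * f x) := by gcongr; exact hup x
        _ = C₁ * C₂ * f x := by ring

lemma memQbar_of_forall_exists_le_norm_le
    (h : ∀ ε > 0, ∃ g ∈ A, (∃ g' ∈ A, g * g' = 1) ∧ ∀ x, f x ≤ ‖g x‖ ∧ ‖g x‖ ≤ (1 + ε) * f x) :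
    MemQbar A f := by
  choose g hgA hunit hg using fun n : ℕ => h (1 / (n + 1)) Nat.one_div_pos_of_nat
  refine ⟨g, fun n => ⟨hgA n, hunit n⟩, Metric.tendstoUniformly_iff.2 fun ε hε => ?_⟩
  have hlim : Tendsto (fun n : ℕ => 1 / ((n : ℝ) + 1) * ‖f‖) atTop (nhds 0) := by
    simpa using tendsto_one_div_add_atTop_nhds_zero_nat.mul_const ‖f‖
  filter_upwards [hlim.eventually (gt_mem_nhds hε)] with n hn x
  obtain ⟨hlow, hup⟩ := hg n x
  rw [Real.dist_eq, abs_sub_comm, abs_of_nonneg (sub_nonneg.2 hlow)]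
  calc ‖g n x‖ - f x ≤ 1 / (n + 1) * f x := by linarith
    _ ≤ 1 / (n + 1) * ‖f‖ := by gcongr; exact (le_abs_self _).trans (f.norm_coe_le_norm x)
    _ < ε := hn

end UniformAlgebraModules

theorem stmt_14_general {Ω : Type*} [TopologicalSpace Ω] [CompactSpace Ω]
    (A : Subalgebra ℂ C(Ω, ℂ))
    (f : C(Ω, ℝ)) (hf : ∀ x, 0 < f x)
    (finv : C(Ω, ℝ)) (hfinv : ∀ x, finv x = (f x)⁻¹)
    (hf2 : finv ^ 2 ∈ closure (calF A)) :
    (ExistsModuleIsometry A (moduleAf A f) (Subalgebra.toSubmodule A) → MemQ A f) ∧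
    (AlmostAIsometric A (moduleAf A f) (Subalgebra.toSubmodule A) → MemQbar A f) := by
  have hfinv2 : ∀ x, (finv ^ 2) x * f x ^ 2 = 1 := fun x => by
    rw [ContinuousMap.pow_apply, hfinv, ← mul_pow, inv_mul_cancel₀ (hf x).ne', one_pow]
  constructor
  · rintro ⟨S, hsurj, hiso, hS⟩
    obtain ⟨g, hgA, hunit, hg⟩ := exists_unit_le_norm_le hf hf2 hfinv2 hS hsurj zero_le_one
      zero_le_one (fun x => by rw [hiso, one_mul]) (fun x => by rw [hiso, one_mul])
    exact ⟨g, hgA, hunit, fun x => le_antisymm (hg x).1 (by simpa using (hg x).2)⟩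
  · intro hT
    refine memQbar_of_forall_exists_le_norm_le fun ε hε => ?_
    obtain ⟨T, hTA, hTnorm⟩ := hT ε hε
    obtain ⟨g, hgA, hunit, hg⟩ := exists_unit_le_norm_le hf hf2 hfinv2 hTA T.surjective
      (norm_nonneg _) (norm_nonneg _) T.toContinuousLinearMap.le_opNorm
      fun x => by
        have h := T.symm.toContinuousLinearMap.le_opNorm (T x)
        rwa [ContinuousLinearEquiv.coe_coe, T.symm_apply_apply] at h
    exact ⟨g, hgA, hunit, fun x =>
      ⟨(hg x).1, (hg x).2.trans (mul_le_mul_of_nonneg_right hTnorm.le (hf x).le)⟩⟩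

theorem stmt_14 {Ω : Type*} [TopologicalSpace Ω] [CompactSpace Ω] [T2Space Ω]
    (A : Subalgebra ℂ C(Ω, ℂ))
    (hclosed : IsClosed (A : Set C(Ω, ℂ)))
    (hsep : ∀ x y : Ω, x ≠ y → ∃ a ∈ A, a x ≠ a y)
    (f : C(Ω, ℝ)) (hf : ∀ x, 0 < f x)
    (finv : C(Ω, ℝ)) (hfinv : ∀ x, finv x = (f x)⁻¹)
    (hf2 : finv ^ 2 ∈ closure (calF A)) :
    (ExistsModuleIsometry A (moduleAf A f) (Subalgebra.toSubmodule A) → MemQ A f) ∧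
    (AlmostAIsometric A (moduleAf A f) (Subalgebra.toSubmodule A) → MemQbar A f) :=
  stmt_14_general A f hf finv hfinv hf2
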